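/- Let σ be a profile over rankings of M alternatives with a Condorcet winner y_i, so that u_i > 1/2 and u_j < 1/2 for all j ≠ i, let α_c ∈ (0, 1), and let β ≥ 0 satisfy β·(u_i − 1/2) ≥ log((M − 1)·α_c/(1 − α_c)). Then the softmax policy π^β, defined by π^β(y_j) := u_j·exp(β·u_j) / Σ_{m=1}^M u_m·exp(β·u_m), satisfies π^β(y_i) ≥ α_c. -/

import Mathlib

open Finset

noncomputable section

/-- A profile: a probability distribution over rankings (permutations of `Fin M`,
where `r i` is the 0-indexed position of alternative `i`, smaller is better). -/
def IsProfile (M : ℕ) (σ : Equiv.Perm (Fin M) → ℝ) : Prop :=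
  (∀ r, 0 ≤ σ r) ∧ ∑ r : Equiv.Perm (Fin M), σ r = 1

/-- Induced preference function `P^σ(y_i ≻ y_j)`. -/
def Pref (M : ℕ) (σ : Equiv.Perm (Fin M) → ℝ) (i j : Fin M) : ℝ :=
  ∑ r : Equiv.Perm (Fin M), σ r * (if r i < r j then (1 : ℝ) else 0)

/-- Top-choice share `w^σ_i`. -/
def topShare (M : ℕ) (σ : Equiv.Perm (Fin M) → ℝ) (i : Fin M) : ℝ :=
  ∑ r : Equiv.Perm (Fin M), (if (r i : ℕ) = 0 then σ r else 0)

/-- Borda score `B(y_i) = Σ_r σ_r (M − r(y_i))` (with 1-indexed ranks; here ranks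
are 0-indexed, so the weight is `M − 1 − r i`). -/
def Borda (M : ℕ) (σ : Equiv.Perm (Fin M) → ℝ) (i : Fin M) : ℝ :=
  ∑ r : Equiv.Perm (Fin M), σ r * ((M : ℝ) - 1 - ((r i : ℕ) : ℝ))

/-- `u_i := min_{j ≠ i} P^σ(y_i ≻ y_j)`. -/
def minPref (M : ℕ) (σ : Equiv.Perm (Fin M) → ℝ) (i : Fin M) : ℝ :=
  sInf {x : ℝ | ∃ j, j ≠ i ∧ x = Pref M σ i j}

/-- The policy `Φ*(σ)(y_i) := u_i / Σ_j u_j`. -/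
def PhiStar (M : ℕ) (σ : Equiv.Perm (Fin M) → ℝ) (i : Fin M) : ℝ :=
  minPref M σ i / ∑ j : Fin M, minPref M σ j

/-!
Every ranking orders `y_i` and `y_j` one way or the other, so `P(y_j ≻ y_i) = 1 - P(y_i ≻ y_j)`:
for a Condorcet winner `y_i` this gives `u_i > 1/2 ≥ u_j` for all `j ≠ i`. Since `x ↦ x e^{βx}` is
monotone on `[0, ∞)` for `β ≥ 0`, each loser contributes at most `(1/2) e^{β/2}` to the softmax
normaliser, while the assumption on `β` makes the winner's term at least `(M - 1) α_c / (1 - α_c)`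
times that.
-/

section Softmax

variable {ι : Type*} [Fintype ι]

def softmaxPolicy (β : ℝ) (u : ι → ℝ) (i : ι) : ℝ :=
  u i * Real.exp (β * u i) / ∑ j, u j * Real.exp (β * u j)

lemma mul_exp_mul_le_mul_exp_mul {β x c : ℝ} (hβ : 0 ≤ β) (hx : 0 ≤ x) (hxc : x ≤ c) :
    x * Real.exp (β * x) ≤ c * Real.exp (β * c) :=
  mul_le_mul hxc (Real.exp_le_exp.2 (by gcongr)) (Real.exp_pos _).le (hx.trans hxc)

lemma le_softmaxPolicy_of_log_le [DecidableEq ι] (u : ι → ℝ) (i : ι) {c β α : ℝ}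
    (hc : 0 ≤ c) (hci : c < u i) (hnonneg : ∀ j ≠ i, 0 ≤ u j) (hle : ∀ j ≠ i, u j ≤ c)
    (hβ : 0 ≤ β) (hα : α ∈ Set.Ioo (0 : ℝ) 1)
    (hgap : Real.log (((Fintype.card ι : ℝ) - 1) * α / (1 - α)) ≤ β * (u i - c)) :
    α ≤ softmaxPolicy β u i := by
  obtain ⟨hα0, hα1⟩ := hα
  set T : ι → ℝ := fun j => u j * Real.exp (β * u j)
  set n : ℝ := (Fintype.card ι : ℝ) - 1
  have hratio : n * α / (1 - α) ≤ Real.exp (β * (u i - c)) :=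
    (Real.le_exp_log _).trans (Real.exp_le_exp.2 hgap)
  have hlosers : ∑ j ∈ univ.erase i, T j ≤ n * (c * Real.exp (β * c)) := by
    have hcard : ((univ.erase i).card : ℝ) = n := by
      rw [card_erase_of_mem (mem_univ i), card_univ, Nat.cast_pred (Fintype.card_pos_iff.2 ⟨i⟩)]
    rw [← hcard, ← nsmul_eq_mul]
    exact sum_le_card_nsmul _ _ _ fun j hj =>
      mul_exp_mul_le_mul_exp_mul hβ (hnonneg j (ne_of_mem_erase hj)) (hle j (ne_of_mem_erase hj))
  have hwinner : α * (n * (c * Real.exp (β * c))) ≤ (1 - α) * T i := by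
    have h1α : 0 < 1 - α := by linarith
    calc α * (n * (c * Real.exp (β * c)))
        = (1 - α) * (n * α / (1 - α)) * (c * Real.exp (β * c)) := by field_simp
      _ ≤ (1 - α) * Real.exp (β * (u i - c)) * (c * Real.exp (β * c)) := by gcongr
      _ = (1 - α) * (c * Real.exp (β * u i)) := by
        rw [mul_comm c, ← mul_assoc, mul_assoc _ _ (Real.exp _), ← Real.exp_add]; ring_nf
      _ ≤ (1 - α) * T i :=
        mul_le_mul_of_nonneg_left (mul_le_mul_of_nonneg_right hci.le (Real.exp_pos _).le) h1α.le
  have hTi : 0 < T i := mul_pos (hc.trans_lt hci) (Real.exp_pos _)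
  have hsplit : ∑ j, T j = T i + ∑ j ∈ univ.erase i, T j := (add_sum_erase _ _ (mem_univ i)).symm
  have hlosers_nonneg : 0 ≤ ∑ j ∈ univ.erase i, T j :=
    sum_nonneg fun j hj => mul_nonneg (hnonneg j (ne_of_mem_erase hj)) (Real.exp_pos _).le
  rw [softmaxPolicy, le_div_iff₀ (by linarith), hsplit]
  nlinarith [mul_le_mul_of_nonneg_left hlosers hα0.le]

end Softmax

section Preference

variable {M : ℕ} {σ : Equiv.Perm (Fin M) → ℝ}

lemma Pref_nonneg (hσ : ∀ r, 0 ≤ σ r) (i j : Fin M) : 0 ≤ Pref M σ i j :=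
  sum_nonneg fun r _ => mul_nonneg (hσ r) (by split_ifs <;> norm_num)

lemma Pref_add_Pref_swap (hσ : IsProfile M σ) {i j : Fin M} (hij : i ≠ j) :
    Pref M σ i j + Pref M σ j i = 1 := by
  rw [Pref, Pref, ← sum_add_distrib]
  refine (sum_congr rfl fun r _ => ?_).trans hσ.2
  rcases (r.injective.ne hij).lt_or_gt with h | h
  · simp [h, h.not_gt]
  · simp [h, h.not_gt]

lemma finite_setOf_Pref_ne (i : Fin M) : {x : ℝ | ∃ j, j ≠ i ∧ x = Pref M σ i j}.Finite :=
  (Set.finite_range (Pref M σ i)).subset fun _ ⟨k, _, hk⟩ => ⟨k, hk.symm⟩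

lemma minPref_le_Pref {i j : Fin M} (hji : j ≠ i) : minPref M σ i ≤ Pref M σ i j :=
  csInf_le (finite_setOf_Pref_ne i).bddBelow ⟨j, hji, rfl⟩

lemma exists_minPref_eq_Pref (hM : 2 ≤ M) (i : Fin M) :
    ∃ j ≠ i, minPref M σ i = Pref M σ i j := by
  have : Nontrivial (Fin M) := Fin.nontrivial_iff_two_le.2 hM
  obtain ⟨j, hji⟩ := exists_ne i
  exact Set.Nonempty.csInf_mem (s := {x | ∃ j, j ≠ i ∧ x = Pref M σ i j}) ⟨_, j, hji, rfl⟩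
    (finite_setOf_Pref_ne i)

lemma minPref_nonneg (hM : 2 ≤ M) (hσ : ∀ r, 0 ≤ σ r) (i : Fin M) : 0 ≤ minPref M σ i := by
  obtain ⟨j, -, hj⟩ := exists_minPref_eq_Pref (σ := σ) hM i
  exact hj ▸ Pref_nonneg hσ i j

def IsCondorcetWinner (M : ℕ) (σ : Equiv.Perm (Fin M) → ℝ) (i : Fin M) : Prop :=
  ∀ j, j ≠ i → 1 / 2 < Pref M σ i j

lemma IsCondorcetWinner.half_lt_minPref {i : Fin M} (hcw : IsCondorcetWinner M σ i)
    (hM : 2 ≤ M) : 1 / 2 < minPref M σ i := by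
  obtain ⟨j, hji, hj⟩ := exists_minPref_eq_Pref (σ := σ) hM i
  exact hj ▸ hcw j hji

lemma IsCondorcetWinner.minPref_lt_half {i j : Fin M} (hcw : IsCondorcetWinner M σ i)
    (hσ : IsProfile M σ) (hji : j ≠ i) : minPref M σ j < 1 / 2 := by
  have := Pref_add_Pref_swap hσ hji.symm
  linarith [minPref_le_Pref (σ := σ) hji.symm, hcw j hji]

end Preference

/-- Condorcet consistency at finite `β`: for a Condorcet winner
`y_i` and `β ≥ 0` with `β (u_i − 1/2) ≥ log((M−1) α_c / (1 − α_c))`, the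
softmax policy puts mass at least `α_c` on `y_i`. -/
theorem softmax_condorcet_at_finite_beta
    (M : ℕ) (hM : 2 ≤ M) (σ : Equiv.Perm (Fin M) → ℝ) (hσ : IsProfile M σ)
    (i : Fin M) (hcw : ∀ j, j ≠ i → 1 / 2 < Pref M σ i j)
    (αc : ℝ) (hαc : αc ∈ Set.Ioo (0 : ℝ) 1)
    (β : ℝ) (hβ0 : 0 ≤ β)
    (hβ : Real.log (((M : ℝ) - 1) * αc / (1 - αc)) ≤ β * (minPref M σ i - 1 / 2)) :
    αc ≤ minPref M σ i * Real.exp (β * minPref M σ i)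
        / ∑ m, minPref M σ m * Real.exp (β * minPref M σ m) := by
  refine le_softmaxPolicy_of_log_le (minPref M σ) i (c := 1 / 2) (by norm_num)
    (IsCondorcetWinner.half_lt_minPref hcw hM) (fun j _ => minPref_nonneg hM hσ.1 j)
    (fun j hj => (IsCondorcetWinner.minPref_lt_half hcw hσ hj).le) hβ0 hαc ?_
  simpa using hβ
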